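/- arXiv:1309.3189 — 2 statements merged into one kernel-verified Lean document; each statement's English description precedes it below -/
import Mathlib

section
/- Let k₁, k₂, k₃ be positive bounded functions on [0,T], φ bounded by K_φ, and p > 2 with p ≤ 1 + 2 k_{2,min}/(K_φ k_{3,max})². Then for all s ∈ [0,T] and x ∈ ℝ, the quantity J(s,x) = (x(k₁(s)x − k₂(s)x²) + ((p−1)/2) k₃(s)² x³ φ(x)²)/(1 + x²) satisfies J(s,x) ≤ k_{1,max} for all x with |x| large enough (in particular for x > 1), hence J is bounded above on [0,T] × [0,∞). -/
theorem J_bounded_example_I (T k1max k2min k3max Kφ p : ℝ)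
    (k₁ k₂ k₃ φ : ℝ → ℝ)
    (hT : 0 ≤ T)
    (hk₁ : ∀ s ∈ Set.Icc 0 T, 0 < k₁ s ∧ k₁ s ≤ k1max)
    (hk₂ : ∀ s ∈ Set.Icc 0 T, 0 < k₂ s ∧ k2min ≤ k₂ s)
    (hk₃ : ∀ s ∈ Set.Icc 0 T, 0 < k₃ s ∧ k₃ s ≤ k3max)
    (hk2min : 0 < k2min) (hk3max : 0 < k3max) (hKφ : 0 < Kφ)
    (hφ : ∀ x : ℝ, |φ x| ≤ Kφ)
    (hp : 2 < p) (hp' : p ≤ 1 + 2 * k2min / (Kφ * k3max) ^ 2)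
    (J : ℝ → ℝ → ℝ)
    (hJ : ∀ s x, J s x =
      (x * (k₁ s * x - k₂ s * x ^ 2) + ((p - 1) / 2) * (k₃ s) ^ 2 * x ^ 3 * (φ x) ^ 2)
        / (1 + x ^ 2)) :
    (∀ s ∈ Set.Icc 0 T, ∀ x : ℝ, 1 < x → J s x ≤ k1max) ∧
    ∃ C : ℝ, ∀ s ∈ Set.Icc 0 T, ∀ x : ℝ, 0 ≤ x → J s x ≤ C := by
  have key : ∀ s ∈ Set.Icc 0 T, ∀ x : ℝ, 0 ≤ x → J s x ≤ k1max := by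
    intro s hs x hx
    obtain ⟨h1, h1'⟩ := hk₁ s hs
    obtain ⟨h2, h2'⟩ := hk₂ s hs
    obtain ⟨h3, h3'⟩ := hk₃ s hs
    have hφx := hφ x
    have hφ0 : 0 ≤ |φ x| := abs_nonneg _
    have hφsq : (φ x) ^ 2 ≤ Kφ ^ 2 := by
      have := sq_abs (φ x)
      nlinarith
    have hk3sq : (k₃ s) ^ 2 ≤ k3max ^ 2 := by nlinarith
    have hden : (0:ℝ) < 1 + x ^ 2 := by positivity
    -- (p-1)/2 * (Kφ*k3max)^2 ≤ k2min
    have hKk : (0:ℝ) < (Kφ * k3max) ^ 2 := by positivity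
    have hc : (p - 1) / 2 * (Kφ * k3max) ^ 2 ≤ k2min := by
      have hc' : p - 1 ≤ 2 * k2min / ((Kφ * k3max) ^ 2) := by linarith
      have := (le_div_iff₀ hKk).mp hc'
      nlinarith
    have hk1pos : 0 < k1max := lt_of_lt_of_le h1 h1'
    rw [hJ, div_le_iff₀ hden]
    have hx3 : 0 ≤ x ^ 3 := by positivity
    have hterm : (p - 1) / 2 * (k₃ s) ^ 2 * x ^ 3 * (φ x) ^ 2 ≤ k₂ s * x ^ 3 := by
      have hp1 : 0 < (p - 1) / 2 := by linarith
      have h3sq : 0 ≤ (k₃ s)^2 := sq_nonneg _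
      have hφsq0 : 0 ≤ (φ x)^2 := sq_nonneg _
      have hmm : (k₃ s) ^ 2 * (φ x) ^ 2 ≤ k3max ^ 2 * Kφ ^ 2 :=
        mul_le_mul hk3sq hφsq hφsq0 (by positivity)
      have : (p - 1) / 2 * (k₃ s) ^ 2 * (φ x) ^ 2 ≤ k2min := by
        have := mul_le_mul_of_nonneg_left hmm hp1.le
        nlinarith [mul_pow Kφ k3max 2]
      calc (p - 1) / 2 * (k₃ s) ^ 2 * x ^ 3 * (φ x) ^ 2
          = ((p - 1) / 2 * (k₃ s) ^ 2 * (φ x) ^ 2) * x ^ 3 := by ring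
        _ ≤ k2min * x ^ 3 := mul_le_mul_of_nonneg_right this hx3
        _ ≤ k₂ s * x ^ 3 := mul_le_mul_of_nonneg_right h2' hx3
    nlinarith [hterm, sq_nonneg x, mul_le_mul_of_nonneg_right h1' (sq_nonneg x)]
  exact ⟨fun s hs x hx => key s hs x (by linarith), ⟨k1max, key⟩⟩
end

section
/- Let q be an odd integer and 3/2 < r < 2 with q > 2r − 1, let k₁, k₂, k₃ be positive bounded functions and φ bounded by K_φ. Then for every p > 2 the function J(s,x) = (x(k₁(s)x − k₂(s)x^q) + ((p−1)/2) k₃(s)² x^{2r} φ(x)²)/(1 + x²) is bounded above uniformly in (s,x) ∈ [0,T] × ℝ. -/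
set_option maxHeartbeats 800000


theorem J_bounded_example_III (T Kφ p r : ℝ) (q : ℕ) (hq : Odd q)
    (k₁ k₂ k₃ φ : ℝ → ℝ) (k1max k2min k3max : ℝ)
    (hT : 0 ≤ T)
    (hr1 : 3/2 < r) (hr2 : r < 2) (hqr : (q : ℝ) > 2 * r - 1)
    (hk₁ : ∀ s ∈ Set.Icc 0 T, 0 < k₁ s ∧ k₁ s ≤ k1max)
    (hk₂ : ∀ s ∈ Set.Icc 0 T, 0 < k₂ s ∧ k2min ≤ k₂ s)
    (hk₃ : ∀ s ∈ Set.Icc 0 T, 0 < k₃ s ∧ k₃ s ≤ k3max)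
    (hk2min : 0 < k2min) (hKφ : 0 < Kφ)
    (hφ : ∀ x : ℝ, |φ x| ≤ Kφ)
    (hp : 2 < p)
    (J : ℝ → ℝ → ℝ)
    (hJ : ∀ s x, J s x =
      (x * (k₁ s * x - k₂ s * x ^ q) + ((p - 1) / 2) * (k₃ s) ^ 2 * |x| ^ (2 * r) * (φ x) ^ 2)
        / (1 + x ^ 2)) :
    ∃ C : ℝ, ∀ s ∈ Set.Icc 0 T, ∀ x : ℝ, J s x ≤ C := by
  obtain ⟨hk3pos, hk3le⟩ := hk₃ 0 ⟨le_refl 0, hT⟩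
  obtain ⟨hk1pos, hk1le⟩ := hk₁ 0 ⟨le_refl 0, hT⟩
  have hk3max : 0 < k3max := lt_of_lt_of_le hk3pos hk3le
  have hk1max : 0 < k1max := lt_of_lt_of_le hk1pos hk1le
  set A : ℝ := (p - 1) / 2 * k3max ^ 2 * Kφ ^ 2 with hA
  have hApos : 0 < A := by
    have h1 : (0:ℝ) < (p - 1) / 2 := by linarith
    exact mul_pos (mul_pos h1 (by positivity)) (by positivity)
  set β : ℝ := (q : ℝ) + 1 - 2 * r with hβ
  have hβpos : 0 < β := by rw [hβ]; linarith
  set M : ℝ := (A / k2min) ^ (1 / β) with hM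
  have hMpos : 0 < M := Real.rpow_pos_of_pos (div_pos hApos hk2min) _
  have hMβ : M ^ β = A / k2min := by
    rw [hM, ← Real.rpow_mul (div_pos hApos hk2min).le, one_div,
      inv_mul_cancel₀ hβpos.ne', Real.rpow_one]
  have hrr : (0:ℝ) ≤ 2 * r - 2 := by linarith
  -- key power inequality
  have key : ∀ t : ℝ, 0 ≤ t →
      A * t ^ (2 * r) ≤ k2min * t ^ ((q : ℝ) + 1) + A * M ^ (2 * r - 2) * t ^ 2 := by
    intro t ht
    rcases eq_or_lt_of_le ht with h0 | h0
    · rw [← h0, Real.zero_rpow (by linarith : 2 * r ≠ 0),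
        Real.zero_rpow (by positivity : (q : ℝ) + 1 ≠ 0)]
      simp
    rcases le_total t M with hle | hle
    · have h1 : t ^ (2 * r) = t ^ (2 * r - 2) * t ^ 2 := by
        rw [← Real.rpow_two, ← Real.rpow_add h0]; ring_nf
      have h2 : t ^ (2 * r - 2) ≤ M ^ (2 * r - 2) :=
        Real.rpow_le_rpow ht hle hrr
      have h3 : 0 ≤ k2min * t ^ ((q : ℝ) + 1) := by positivity
      have h4 : A * (t ^ (2 * r - 2) * t ^ 2) ≤ A * (M ^ (2 * r - 2) * t ^ 2) := by
        apply mul_le_mul_of_nonneg_left _ hApos.le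
        exact mul_le_mul_of_nonneg_right h2 (sq_nonneg t)
      rw [h1]
      nlinarith
    · have h1 : t ^ ((q : ℝ) + 1) = t ^ (2 * r) * t ^ β := by
        rw [← Real.rpow_add h0, hβ]; ring_nf
      have h2 : M ^ β ≤ t ^ β := Real.rpow_le_rpow hMpos.le hle hβpos.le
      rw [hMβ] at h2
      have h3 : 0 ≤ A * M ^ (2 * r - 2) * t ^ 2 := by positivity
      have h4 : k2min * (t ^ (2 * r) * t ^ β) ≥ k2min * (t ^ (2 * r) * (A / k2min)) := by
        apply mul_le_mul_of_nonneg_left _ hk2min.le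
        exact mul_le_mul_of_nonneg_left h2 (Real.rpow_nonneg ht _)
      have h5 : k2min * (t ^ (2 * r) * (A / k2min)) = A * t ^ (2 * r) := by
        field_simp
      rw [h1]
      nlinarith
  refine ⟨k1max + A * M ^ (2 * r - 2), fun s hs x => ?_⟩
  have hden : (0:ℝ) < 1 + x ^ 2 := by positivity
  rw [hJ, div_le_iff₀ hden]
  have habs : 0 ≤ |x| := abs_nonneg x
  -- rewrite x * (k₁ x - k₂ x^q) and x^(q+1)
  have hxq : x * (k₁ s * x - k₂ s * x ^ q) = k₁ s * x ^ 2 - k₂ s * x ^ (q + 1) := by ring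
  have hevq : x ^ (q + 1) = |x| ^ (q + 1) := (hq.add_one.pow_abs x).symm
  have hq1 : |x| ^ (q + 1) = |x| ^ ((q : ℝ) + 1) := by
    rw [← Real.rpow_natCast |x| (q + 1)]; push_cast; ring_nf
  -- bound the three pieces
  have hb1 : k₁ s * x ^ 2 ≤ k1max * x ^ 2 :=
    mul_le_mul_of_nonneg_right (hk₁ s hs).2 (sq_nonneg x)
  have hb2 : k2min * |x| ^ ((q : ℝ) + 1) ≤ k₂ s * |x| ^ ((q : ℝ) + 1) :=
    mul_le_mul_of_nonneg_right (hk₂ s hs).2 (Real.rpow_nonneg habs _)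
  have hb3 : (p - 1) / 2 * (k₃ s) ^ 2 * |x| ^ (2 * r) * (φ x) ^ 2 ≤ A * |x| ^ (2 * r) := by
    have h1 : (k₃ s) ^ 2 ≤ k3max ^ 2 :=
      pow_le_pow_left₀ (hk₃ s hs).1.le (hk₃ s hs).2 2
    have h2 : (φ x) ^ 2 ≤ Kφ ^ 2 := by
      obtain ⟨ha, hb⟩ := abs_le.mp (hφ x)
      exact sq_le_sq' ha hb
    have h3 : 0 ≤ |x| ^ (2 * r) := Real.rpow_nonneg habs _
    have hk3s : 0 ≤ (k₃ s) ^ 2 := sq_nonneg _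
    have hφs : 0 ≤ (φ x) ^ 2 := sq_nonneg _
    have hp2 : (0:ℝ) ≤ (p - 1) / 2 := by linarith
    calc (p - 1) / 2 * (k₃ s) ^ 2 * |x| ^ (2 * r) * (φ x) ^ 2
        = ((p - 1) / 2 * (k₃ s) ^ 2 * (φ x) ^ 2) * |x| ^ (2 * r) := by ring
      _ ≤ ((p - 1) / 2 * (k3max ^ 2 * Kφ ^ 2)) * |x| ^ (2 * r) := by
          apply mul_le_mul_of_nonneg_right _ h3
          have h12 : (k₃ s) ^ 2 * (φ x) ^ 2 ≤ k3max ^ 2 * Kφ ^ 2 :=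
            mul_le_mul h1 h2 hφs (sq_nonneg _)
          calc (p - 1) / 2 * (k₃ s) ^ 2 * (φ x) ^ 2
              = (p - 1) / 2 * ((k₃ s) ^ 2 * (φ x) ^ 2) := by ring
            _ ≤ (p - 1) / 2 * (k3max ^ 2 * Kφ ^ 2) :=
                mul_le_mul_of_nonneg_left h12 hp2
      _ = A * |x| ^ (2 * r) := by rw [hA]; ring
  have hkey := key |x| habs
  rw [sq_abs] at hkey
  have hC : 0 ≤ k1max + A * M ^ (2 * r - 2) := by positivity
  rw [hxq, hevq, hq1]
  linarith [hb1, hb2, hb3, hkey, mul_nonneg hC (sq_nonneg x)]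
end
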